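/- arXiv:2504.02482 — 3 statements merged into one kernel-verified Lean document; each statement's English description precedes it below -/
import Mathlib

section
/- Let H ∈ (0, 1/2). There is a constant C such that for all n ≥ 1, ∑_{j,k,l=1}^{n} (1 + min(j,k))^{2(H-1)} · (1 + |k−l|)^{2(H-1)} · (1 + |l−j|)^{2(H-1)} ≤ C, with C independent of n. -/
open Finset

private lemma aux_summable {α : ℝ} (hα : α < -1) :
    Summable (fun d : ℤ => (1 + |(d : ℝ)|) ^ α) := by
  have hnat : Summable (fun n : ℕ => (1 + (n : ℝ)) ^ α) := by
    have h := (Real.summable_nat_rpow (p := α)).mpr hα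
    have h1 := (summable_nat_add_iff (f := fun n : ℕ => ((n : ℝ)) ^ α) 1).mpr h
    refine h1.congr fun n => ?_
    push_cast
    ring_nf
  refine Summable.of_nat_of_neg ?_ ?_ <;>
    refine hnat.congr fun n => ?_ <;> simp

private lemma aux_sum_le {α : ℝ} (hα : α < -1) (n : ℕ) (j : ℕ) :
    ∑ l ∈ Finset.Icc 1 n, (1 + |(l : ℝ) - (j : ℝ)|) ^ α
      ≤ ∑' d : ℤ, (1 + |(d : ℝ)|) ^ α := by
  have hs := aux_summable hα
  have hinj : Set.InjOn (fun l : ℕ => (l : ℤ) - (j : ℤ)) (Finset.Icc 1 n) := by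
    intro a _ b _ h
    simpa using h
  have h1 : ∑ l ∈ Finset.Icc 1 n, (1 + |(l : ℝ) - (j : ℝ)|) ^ α
      = ∑ d ∈ (Finset.Icc 1 n).image (fun l : ℕ => (l : ℤ) - (j : ℤ)),
          (1 + |(d : ℝ)|) ^ α := by
    rw [Finset.sum_image (fun a ha b hb h => hinj ha hb h)]
    refine Finset.sum_congr rfl fun l _ => ?_
    push_cast
    ring_nf
  rw [h1]
  refine Summable.sum_le_tsum _ (fun d _ => ?_) hs
  positivity

theorem stmt15 (H : ℝ) (hH : H ∈ Set.Ioo (0 : ℝ) (1/2)) :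
    ∃ C > 0, ∀ n : ℕ, 1 ≤ n →
      ∑ j ∈ Finset.Icc 1 n, ∑ k ∈ Finset.Icc 1 n, ∑ l ∈ Finset.Icc 1 n,
          (1 + (min j k : ℝ)) ^ (2 * (H - 1)) * (1 + |(k : ℝ) - (l : ℝ)|) ^ (2 * (H - 1))
            * (1 + |(l : ℝ) - (j : ℝ)|) ^ (2 * (H - 1))
        ≤ C := by
  obtain ⟨hH0, hH2⟩ := hH
  set α : ℝ := 2 * (H - 1) with hα_def
  have hα : α < -1 := by rw [hα_def]; linarith
  set S : ℝ := ∑' d : ℤ, (1 + |(d : ℝ)|) ^ α with hS_def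
  have hS0 : 0 ≤ S := tsum_nonneg (fun d => by positivity)
  -- main bound for inner sums
  have key : ∀ (n : ℕ) (x : ℕ), ∑ l ∈ Finset.Icc 1 n, (1 + |(l : ℝ) - (x : ℝ)|) ^ α ≤ S :=
    fun n x => aux_sum_le hα n x
  have keyA : ∀ (n : ℕ), ∑ j ∈ Finset.Icc 1 n, (1 + (j : ℝ)) ^ α ≤ S := by
    intro n
    have := key n 0
    simpa using this
  refine ⟨2 * S ^ 3 + 1, by positivity, fun n _hn => ?_⟩
  have hnn : ∀ (a b : ℕ), (0 : ℝ) ≤ (1 + |(a : ℝ) - (b : ℝ)|) ^ α := fun a b => by positivity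
  have hA : ∀ (a : ℕ), (0 : ℝ) ≤ (1 + (a : ℝ)) ^ α := fun a => by positivity
  -- pointwise bound on the min term
  have hmin : ∀ j k : ℕ, (1 + (min j k : ℝ)) ^ α ≤ (1 + (j : ℝ)) ^ α + (1 + (k : ℝ)) ^ α := by
    intro j k
    rcases le_total (j : ℝ) (k : ℝ) with h | h
    · rw [min_eq_left h]
      exact le_add_of_nonneg_right (hA k)
    · rw [min_eq_right h]
      exact le_add_of_nonneg_left (hA j)
  -- bound the whole triple sum
  have step1 :
      ∑ j ∈ Finset.Icc 1 n, ∑ k ∈ Finset.Icc 1 n, ∑ l ∈ Finset.Icc 1 n,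
          (1 + (min j k : ℝ)) ^ α * (1 + |(k : ℝ) - (l : ℝ)|) ^ α
            * (1 + |(l : ℝ) - (j : ℝ)|) ^ α
      ≤ ∑ j ∈ Finset.Icc 1 n, ∑ k ∈ Finset.Icc 1 n, ∑ l ∈ Finset.Icc 1 n,
          ((1 + (j : ℝ)) ^ α + (1 + (k : ℝ)) ^ α) * (1 + |(k : ℝ) - (l : ℝ)|) ^ α
            * (1 + |(l : ℝ) - (j : ℝ)|) ^ α := by
    refine Finset.sum_le_sum fun j _ => Finset.sum_le_sum fun k _ => Finset.sum_le_sum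
      fun l _ => ?_
    have := hmin j k
    have h1 := hnn k l
    have h2 := hnn l j
    nlinarith [mul_nonneg h1 h2]
  -- part bound : for the term with A j
  have part1 :
      ∑ j ∈ Finset.Icc 1 n, ∑ k ∈ Finset.Icc 1 n, ∑ l ∈ Finset.Icc 1 n,
          (1 + (j : ℝ)) ^ α * (1 + |(k : ℝ) - (l : ℝ)|) ^ α
            * (1 + |(l : ℝ) - (j : ℝ)|) ^ α ≤ S ^ 3 := by
    have inner : ∀ j : ℕ,
        ∑ k ∈ Finset.Icc 1 n, ∑ l ∈ Finset.Icc 1 n,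
          (1 + |(k : ℝ) - (l : ℝ)|) ^ α * (1 + |(l : ℝ) - (j : ℝ)|) ^ α ≤ S * S := by
      intro j
      rw [Finset.sum_comm]
      calc ∑ l ∈ Finset.Icc 1 n, ∑ k ∈ Finset.Icc 1 n,
            (1 + |(k : ℝ) - (l : ℝ)|) ^ α * (1 + |(l : ℝ) - (j : ℝ)|) ^ α
          = ∑ l ∈ Finset.Icc 1 n,
            (∑ k ∈ Finset.Icc 1 n, (1 + |(k : ℝ) - (l : ℝ)|) ^ α)
              * (1 + |(l : ℝ) - (j : ℝ)|) ^ α := by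
            simp [Finset.sum_mul]
        _ ≤ ∑ l ∈ Finset.Icc 1 n, S * (1 + |(l : ℝ) - (j : ℝ)|) ^ α := by
            refine Finset.sum_le_sum fun l _ => ?_
            exact mul_le_mul_of_nonneg_right (key n l) (hnn l j)
        _ = S * ∑ l ∈ Finset.Icc 1 n, (1 + |(l : ℝ) - (j : ℝ)|) ^ α := by
            rw [Finset.mul_sum]
        _ ≤ S * S := mul_le_mul_of_nonneg_left (key n j) hS0
    calc ∑ j ∈ Finset.Icc 1 n, ∑ k ∈ Finset.Icc 1 n, ∑ l ∈ Finset.Icc 1 n,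
          (1 + (j : ℝ)) ^ α * (1 + |(k : ℝ) - (l : ℝ)|) ^ α
            * (1 + |(l : ℝ) - (j : ℝ)|) ^ α
        = ∑ j ∈ Finset.Icc 1 n, (1 + (j : ℝ)) ^ α *
            ∑ k ∈ Finset.Icc 1 n, ∑ l ∈ Finset.Icc 1 n,
              (1 + |(k : ℝ) - (l : ℝ)|) ^ α * (1 + |(l : ℝ) - (j : ℝ)|) ^ α := by
          refine Finset.sum_congr rfl fun j _ => ?_
          rw [Finset.mul_sum]
          refine Finset.sum_congr rfl fun k _ => ?_
          rw [Finset.mul_sum]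
          refine Finset.sum_congr rfl fun l _ => ?_
          ring
      _ ≤ ∑ j ∈ Finset.Icc 1 n, (1 + (j : ℝ)) ^ α * (S * S) := by
          refine Finset.sum_le_sum fun j _ => ?_
          exact mul_le_mul_of_nonneg_left (inner j) (hA j)
      _ = (∑ j ∈ Finset.Icc 1 n, (1 + (j : ℝ)) ^ α) * (S * S) := by
          rw [Finset.sum_mul]
      _ ≤ S * (S * S) := by
          refine mul_le_mul_of_nonneg_right (keyA n) (by positivity)
      _ = S ^ 3 := by ring
  -- part bound : for the term with A k
  have part2 :
      ∑ j ∈ Finset.Icc 1 n, ∑ k ∈ Finset.Icc 1 n, ∑ l ∈ Finset.Icc 1 n,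
          (1 + (k : ℝ)) ^ α * (1 + |(k : ℝ) - (l : ℝ)|) ^ α
            * (1 + |(l : ℝ) - (j : ℝ)|) ^ α ≤ S ^ 3 := by
    rw [Finset.sum_comm]
    have inner : ∀ k : ℕ,
        ∑ j ∈ Finset.Icc 1 n, ∑ l ∈ Finset.Icc 1 n,
          (1 + |(k : ℝ) - (l : ℝ)|) ^ α * (1 + |(l : ℝ) - (j : ℝ)|) ^ α ≤ S * S := by
      intro k
      rw [Finset.sum_comm]
      calc ∑ l ∈ Finset.Icc 1 n, ∑ j ∈ Finset.Icc 1 n,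
            (1 + |(k : ℝ) - (l : ℝ)|) ^ α * (1 + |(l : ℝ) - (j : ℝ)|) ^ α
          = ∑ l ∈ Finset.Icc 1 n, (1 + |(k : ℝ) - (l : ℝ)|) ^ α *
              ∑ j ∈ Finset.Icc 1 n, (1 + |(l : ℝ) - (j : ℝ)|) ^ α := by
            simp [Finset.mul_sum]
        _ ≤ ∑ l ∈ Finset.Icc 1 n, (1 + |(k : ℝ) - (l : ℝ)|) ^ α * S := by
            refine Finset.sum_le_sum fun l _ => ?_
            refine mul_le_mul_of_nonneg_left ?_ (hnn k l)
            refine le_trans (le_of_eq (Finset.sum_congr rfl fun j _ => by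
              rw [abs_sub_comm])) (key n l)
        _ = (∑ l ∈ Finset.Icc 1 n, (1 + |(k : ℝ) - (l : ℝ)|) ^ α) * S := by
            rw [Finset.sum_mul]
        _ ≤ S * S := by
            refine mul_le_mul_of_nonneg_right ?_ hS0
            have h := key n k
            refine le_trans (le_of_eq ?_) h
            refine Finset.sum_congr rfl fun l _ => ?_
            rw [abs_sub_comm]
    calc ∑ k ∈ Finset.Icc 1 n, ∑ j ∈ Finset.Icc 1 n, ∑ l ∈ Finset.Icc 1 n,
          (1 + (k : ℝ)) ^ α * (1 + |(k : ℝ) - (l : ℝ)|) ^ α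
            * (1 + |(l : ℝ) - (j : ℝ)|) ^ α
        = ∑ k ∈ Finset.Icc 1 n, (1 + (k : ℝ)) ^ α *
            ∑ j ∈ Finset.Icc 1 n, ∑ l ∈ Finset.Icc 1 n,
              (1 + |(k : ℝ) - (l : ℝ)|) ^ α * (1 + |(l : ℝ) - (j : ℝ)|) ^ α := by
          refine Finset.sum_congr rfl fun k _ => ?_
          rw [Finset.mul_sum]
          refine Finset.sum_congr rfl fun j _ => ?_
          rw [Finset.mul_sum]
          refine Finset.sum_congr rfl fun l _ => ?_
          ring
      _ ≤ ∑ k ∈ Finset.Icc 1 n, (1 + (k : ℝ)) ^ α * (S * S) := by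
          refine Finset.sum_le_sum fun k _ => ?_
          exact mul_le_mul_of_nonneg_left (inner k) (hA k)
      _ = (∑ k ∈ Finset.Icc 1 n, (1 + (k : ℝ)) ^ α) * (S * S) := by
          rw [Finset.sum_mul]
      _ ≤ S * (S * S) := mul_le_mul_of_nonneg_right (keyA n) (by positivity)
      _ = S ^ 3 := by ring
  have expand :
      ∑ j ∈ Finset.Icc 1 n, ∑ k ∈ Finset.Icc 1 n, ∑ l ∈ Finset.Icc 1 n,
          ((1 + (j : ℝ)) ^ α + (1 + (k : ℝ)) ^ α) * (1 + |(k : ℝ) - (l : ℝ)|) ^ α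
            * (1 + |(l : ℝ) - (j : ℝ)|) ^ α
        = (∑ j ∈ Finset.Icc 1 n, ∑ k ∈ Finset.Icc 1 n, ∑ l ∈ Finset.Icc 1 n,
            (1 + (j : ℝ)) ^ α * (1 + |(k : ℝ) - (l : ℝ)|) ^ α
              * (1 + |(l : ℝ) - (j : ℝ)|) ^ α)
          + ∑ j ∈ Finset.Icc 1 n, ∑ k ∈ Finset.Icc 1 n, ∑ l ∈ Finset.Icc 1 n,
            (1 + (k : ℝ)) ^ α * (1 + |(k : ℝ) - (l : ℝ)|) ^ α
              * (1 + |(l : ℝ) - (j : ℝ)|) ^ α := by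
    rw [← Finset.sum_add_distrib]
    refine Finset.sum_congr rfl fun j _ => ?_
    rw [← Finset.sum_add_distrib]
    refine Finset.sum_congr rfl fun k _ => ?_
    rw [← Finset.sum_add_distrib]
    refine Finset.sum_congr rfl fun l _ => ?_
    ring
  refine le_trans step1 ?_
  rw [expand]
  linarith [part1, part2]
end

section
/- Let H ∈ (0, 1/2). There is a constant C such that for all n ≥ 1, ∑_{1 ≤ j ≤ k ≤ l ≤ m ≤ n} (1+j)^{2(H-1)} (1+k)^{2(H-1)} (1+l)^{2(H-1)} (1+(m−j))^{H-1} ≤ C · n^{H}. -/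
open Finset

/-!
Since `2 * (H - 1) < -1`, each of the three factors `(1 + i) ^ (2 * (H - 1))` is summable and
contributes only a constant. The sum over `m` is at most `∑_{i ≤ n} i ^ (H - 1)`, which
telescopes to at most `n ^ H / H` by the concavity bound `H i ^ (H - 1) ≤ i ^ H - (i - 1) ^ H`.
-/

theorem mul_rpow_sub_one_le_rpow_sub_rpow {x p : ℝ} (hx : 0 ≤ x) (hp0 : 0 ≤ p) (hp1 : p ≤ 1) :
    p * (x + 1) ^ (p - 1) ≤ (x + 1) ^ p - x ^ p := by
  have hy : 0 < x + 1 := by linarith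
  have hbern : (1 + -1 / (x + 1)) ^ p ≤ 1 + p * (-1 / (x + 1)) :=
    rpow_one_add_le_one_add_mul_self (by rw [neg_div, neg_le_neg_iff, div_le_one hy]; linarith)
      hp0 hp1
  have hbase : 1 + -1 / (x + 1) = x / (x + 1) := by field_simp; ring
  rw [hbase, Real.div_rpow hx hy.le, div_le_iff₀ (by positivity)] at hbern
  rw [Real.rpow_sub_one hy.ne']
  have : (1 + p * (-1 / (x + 1))) * (x + 1) ^ p = (x + 1) ^ p - p * ((x + 1) ^ p / (x + 1)) := by
    ring
  linarith

theorem sum_range_succ_rpow_sub_one_le {p : ℝ} (hp0 : 0 < p) (hp1 : p ≤ 1) (n : ℕ) :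
    ∑ i ∈ range n, ((i : ℝ) + 1) ^ (p - 1) ≤ (n : ℝ) ^ p / p := by
  induction n with
  | zero => simp [Real.zero_rpow hp0.ne']
  | succ n ih =>
    have hstep := mul_rpow_sub_one_le_rpow_sub_rpow n.cast_nonneg hp0.le hp1
    rw [le_div_iff₀ hp0] at ih
    rw [sum_range_succ, Nat.cast_succ, le_div_iff₀ hp0, add_mul]
    linarith

theorem sum_Icc_one_add_sub_rpow_le {r : ℝ} (hr : r ≤ 0) {j l : ℕ} (hjl : j ≤ l) (hl : 1 ≤ l)
    (n : ℕ) :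
    ∑ m ∈ Icc l n, (1 + ((m : ℝ) - j)) ^ r ≤ ∑ i ∈ range n, ((i : ℝ) + 1) ^ r := by
  rw [← Ico_add_one_right_eq_Icc, sum_Ico_eq_sum_range]
  calc ∑ i ∈ range (n + 1 - l), (1 + (((l + i : ℕ) : ℝ) - j)) ^ r
      ≤ ∑ i ∈ range (n + 1 - l), ((i : ℝ) + 1) ^ r := by
        refine sum_le_sum fun i _ => Real.rpow_le_rpow_of_nonpos (by positivity) ?_ hr
        have : (j : ℝ) ≤ l := by exact_mod_cast hjl
        push_cast
        linarith
    _ ≤ ∑ i ∈ range n, ((i : ℝ) + 1) ^ r :=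
        sum_le_sum_of_subset_of_nonneg (range_subset_range.mpr (by omega))
          fun i _ _ => by positivity

theorem sum_mul_le_tsum_mul {ι : Type*} {f g : ι → ℝ} {c : ℝ} (s : Finset ι) (hf : ∀ i, 0 ≤ f i)
    (hfs : Summable f) (hc : 0 ≤ c) (hg : ∀ i ∈ s, g i ≤ c) :
    ∑ i ∈ s, f i * g i ≤ (∑' i, f i) * c :=
  calc ∑ i ∈ s, f i * g i ≤ ∑ i ∈ s, f i * c :=
        sum_le_sum fun i hi => mul_le_mul_of_nonneg_left (hg i hi) (hf i)
    _ = (∑ i ∈ s, f i) * c := (sum_mul ..).symm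
    _ ≤ (∑' i, f i) * c :=
        mul_le_mul_of_nonneg_right (hfs.sum_le_tsum s fun i _ => hf i) hc

theorem summable_one_add_nat_rpow {p : ℝ} (hp : p < -1) :
    Summable fun i : ℕ => (1 + (i : ℝ)) ^ p := by
  refine ((summable_nat_add_iff 1).mpr (Real.summable_nat_rpow.mpr hp)).congr fun i => ?_
  push_cast
  ring_nf

theorem stmt17 (H : ℝ) (hH : H ∈ Set.Ioo (0 : ℝ) (1/2)) :
    ∃ C > 0, ∀ n : ℕ, 1 ≤ n →
      ∑ j ∈ Finset.Icc 1 n, ∑ k ∈ Finset.Icc j n, ∑ l ∈ Finset.Icc k n, ∑ m ∈ Finset.Icc l n,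
          (1 + (j : ℝ)) ^ (2 * (H - 1)) * (1 + (k : ℝ)) ^ (2 * (H - 1))
            * (1 + (l : ℝ)) ^ (2 * (H - 1)) * (1 + ((m : ℝ) - (j : ℝ))) ^ (H - 1)
        ≤ C * (n : ℝ) ^ H := by
  obtain ⟨hH0, hH1⟩ := hH
  set a : ℕ → ℝ := fun i => (1 + (i : ℝ)) ^ (2 * (H - 1))
  have ha : ∀ i, 0 ≤ a i := fun i => by positivity
  have hsum : Summable a := summable_one_add_nat_rpow (by linarith)
  set S := ∑' i, a i
  have hS : 0 < S := hsum.tsum_pos ha 0 (by simp [a])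
  refine ⟨S * S * S / H, by positivity, fun n _ => ?_⟩
  have hB : 0 ≤ (n : ℝ) ^ H / H := by positivity
  calc _ = ∑ j ∈ Icc 1 n, a j * ∑ k ∈ Icc j n, a k * ∑ l ∈ Icc k n, a l *
          ∑ m ∈ Icc l n, (1 + ((m : ℝ) - j)) ^ (H - 1) := by
        simp only [a, mul_assoc, mul_sum]
    _ ≤ S * (S * (S * ((n : ℝ) ^ H / H))) := by
        refine sum_mul_le_tsum_mul _ ha hsum (by positivity) fun j hj => ?_
        refine sum_mul_le_tsum_mul _ ha hsum (by positivity) fun k hk => ?_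
        refine sum_mul_le_tsum_mul _ ha hsum hB fun l hl => ?_
        simp only [mem_Icc] at hj hk hl
        exact (sum_Icc_one_add_sub_rpow_le (by linarith) (hk.1.trans hl.1) (by omega) n).trans
          (sum_range_succ_rpow_sub_one_le hH0 (by linarith) n)
    _ = S * S * S / H * (n : ℝ) ^ H := by ring
end

section
/- Let θ > 0, H' ∈ (1/2, 1), K ∈ (0, 2) with H = H'K ∈ (1/2, 1). There is a constant C such that for all 0 < s ≤ t, ∫₀ˢ e^{-θ(s-u)} du ∫ₛᵗ e^{-θ(t-v)} (u^{2H'}+v^{2H'})^{K-2} (uv)^{2H'-1} dv ≤ C (t−s)^{2(H-1)}. -/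
/-!
For `u ≤ s < v` the kernel is at most `v ^ (2H'(K-2)) * v ^ (2(2H'-1)) = v ^ (2(H'K-1))`, which is
at most `(v - s) ^ (2(H'K-1))` because the exponent is negative. The double integral is therefore
bounded by `∫₀ˢ e^{-θ(s-u)} du ≤ 1/θ` times `∫ₛᵗ e^{-θ(t-v)} (v-s)^{2(H'K-1)} dv`. Splitting the
latter at the midpoint `m`, the exponential weight on `[s, m]` is at most `e^{-θ(t-s)/2}`, which
absorbs the extra factor `(t-s)/2` produced by integrating the singularity (`x e^{-θx} ≤ 1/θ`);
on `[m, t]` the power is at most `((t-s)/2)^{2(H'K-1)}`.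
-/

open Real MeasureTheory

lemma integral_exp_neg_mul_sub_le {θ : ℝ} (hθ : 0 < θ) (a b : ℝ) :
    ∫ v in a..b, exp (-θ * (b - v)) ≤ θ⁻¹ := by
  have hlin : (fun v => exp (-θ * (b - v))) = fun v => exp (θ * v + -θ * b) := by
    funext v; ring_nf
  rw [hlin, intervalIntegral.integral_comp_mul_add _ hθ.ne', integral_exp, smul_eq_mul]
  have : exp (θ * b + -θ * b) = 1 := by simp
  rw [this]
  have := exp_pos (θ * a + -θ * b)
  have := inv_pos.2 hθ
  nlinarith

lemma mul_exp_neg_mul_le_inv {θ : ℝ} (hθ : 0 < θ) (x : ℝ) : x * exp (-(θ * x)) ≤ θ⁻¹ := by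
  rw [exp_neg, ← div_eq_mul_inv, div_le_iff₀ (exp_pos _), inv_mul_eq_div, le_div_iff₀ hθ]
  linarith [add_one_le_exp (θ * x)]

lemma integral_exp_neg_mul_sub_mul_rpow_le {θ A T : ℝ} (hθ : 0 < θ) (hA : -1 < A) (hA0 : A ≤ 0)
    (hT : 0 ≤ T) :
    ∫ w in 0..T, exp (-θ * (T - w)) * w ^ A ≤ ((A + 1)⁻¹ + 1) / θ * (T / 2) ^ A := by
  rcases hT.eq_or_lt with rfl | hT
  · have : 0 < A + 1 := by linarith
    simp only [intervalIntegral.integral_same]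
    positivity
  set m := T / 2 with hm
  have hm0 : 0 < m := by positivity
  have hexp : Continuous fun w => exp (-θ * (T - w)) := by fun_prop
  have hrpow (a b : ℝ) : IntervalIntegrable (fun w : ℝ => w ^ A) volume a b :=
    intervalIntegral.intervalIntegrable_rpow' hA
  have hint (a b : ℝ) : IntervalIntegrable (fun w => exp (-θ * (T - w)) * w ^ A) volume a b :=
    (hrpow a b).continuousOn_mul hexp.continuousOn
  have hnear : ∫ w in 0..m, exp (-θ * (T - w)) * w ^ A ≤ (A + 1)⁻¹ / θ * m ^ A := by
    calc ∫ w in 0..m, exp (-θ * (T - w)) * w ^ A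
        ≤ ∫ w in 0..m, exp (-(θ * m)) * w ^ A := by
          refine intervalIntegral.integral_mono_on hm0.le (hint 0 m) ((hrpow 0 m).const_mul _)
            fun w hw => mul_le_mul_of_nonneg_right ?_ (rpow_nonneg hw.1 A)
          exact exp_le_exp.2 (by nlinarith [hw.2])
      _ = (A + 1)⁻¹ * m ^ A * (m * exp (-(θ * m))) := by
          rw [intervalIntegral.integral_const_mul, integral_rpow (Or.inl hA),
            zero_rpow (by linarith : 0 < A + 1).ne', rpow_add_one hm0.ne']
          ring
      _ ≤ (A + 1)⁻¹ * m ^ A * θ⁻¹ := by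
          have : 0 < A + 1 := by linarith
          gcongr
          exact mul_exp_neg_mul_le_inv hθ m
      _ = (A + 1)⁻¹ / θ * m ^ A := by ring
  have hfar : ∫ w in m..T, exp (-θ * (T - w)) * w ^ A ≤ θ⁻¹ * m ^ A := by
    calc ∫ w in m..T, exp (-θ * (T - w)) * w ^ A
        ≤ ∫ w in m..T, exp (-θ * (T - w)) * m ^ A := by
          refine intervalIntegral.integral_mono_on (by linarith) (hint m T)
            ((hexp.intervalIntegrable m T).mul_const _)
            fun w hw => mul_le_mul_of_nonneg_left ?_ (exp_pos _).le
          exact rpow_le_rpow_of_nonpos hm0 hw.1 hA0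
      _ = (∫ w in m..T, exp (-θ * (T - w))) * m ^ A := intervalIntegral.integral_mul_const _ _
      _ ≤ θ⁻¹ * m ^ A := by
          gcongr
          exact integral_exp_neg_mul_sub_le hθ m T
  rw [← intervalIntegral.integral_add_adjacent_intervals (hint 0 m) (hint m T)]
  calc _ ≤ (A + 1)⁻¹ / θ * m ^ A + θ⁻¹ * m ^ A := add_le_add hnear hfar
    _ = _ := by ring

lemma integral_exp_neg_mul_sub_mul_rpow_sub_le {θ A s t : ℝ} (hθ : 0 < θ) (hA : -1 < A)
    (hA0 : A ≤ 0) (hst : s ≤ t) :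
    ∫ v in s..t, exp (-θ * (t - v)) * (v - s) ^ A ≤ ((A + 1)⁻¹ + 1) / θ * ((t - s) / 2) ^ A := by
  have hsub := intervalIntegral.integral_comp_sub_right
    (fun w => exp (-θ * (t - s - w)) * w ^ A) (a := s) (b := t) s
  simp only [sub_self, sub_sub_sub_cancel_right] at hsub
  rw [hsub]
  exact integral_exp_neg_mul_sub_mul_rpow_le hθ hA hA0 (sub_nonneg.2 hst)

lemma rpow_add_rpow_rpow_mul_mul_rpow_le {u v p q r : ℝ} (hu : 0 ≤ u) (huv : u ≤ v) (hv : 0 < v)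
    (hq : q ≤ 0) (hr : 0 ≤ r) :
    (u ^ p + v ^ p) ^ q * (u * v) ^ r ≤ v ^ (p * q + 2 * r) := by
  calc (u ^ p + v ^ p) ^ q * (u * v) ^ r ≤ (v ^ p) ^ q * (v * v) ^ r := by
        gcongr ?_ * ?_
        · exact rpow_le_rpow_of_nonpos (by positivity) (le_add_of_nonneg_left (by positivity)) hq
        · exact rpow_le_rpow (by positivity) (by gcongr) hr
    _ = v ^ (p * q + 2 * r) := by
        rw [← rpow_mul hv.le, mul_rpow hv.le hv.le, ← rpow_add hv, ← rpow_add hv]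
        ring_nf

lemma integral_integral_le_integral_mul_integral {f : ℝ → ℝ → ℝ} {g h : ℝ → ℝ} {a b c d : ℝ}
    (hab : a ≤ b) (hcd : c ≤ d) (hg : IntervalIntegrable g volume a b)
    (hh : IntervalIntegrable h volume c d)
    (hf0 : ∀ u ∈ Set.Ioc a b, ∀ v ∈ Set.Ioc c d, 0 ≤ f u v)
    (hfgh : ∀ u ∈ Set.Ioc a b, ∀ v ∈ Set.Ioc c d, f u v ≤ g u * h v) :
    ∫ u in a..b, ∫ v in c..d, f u v ≤ (∫ u in a..b, g u) * ∫ v in c..d, h v := by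
  have hinner : ∀ u ∈ Set.Ioc a b, ∫ v in c..d, f u v ≤ g u * ∫ v in c..d, h v := by
    intro u hu
    rw [← intervalIntegral.integral_const_mul, intervalIntegral.integral_of_le hcd,
      intervalIntegral.integral_of_le hcd]
    refine integral_mono_of_nonneg ?_ (hh.1.const_mul _) ?_ <;>
      filter_upwards [ae_restrict_mem measurableSet_Ioc] with v hv
    exacts [hf0 u hu v hv, hfgh u hu v hv]
  rw [← intervalIntegral.integral_mul_const, intervalIntegral.integral_of_le hab,
    intervalIntegral.integral_of_le hab]
  refine integral_mono_of_nonneg ?_ (hg.1.mul_const _) ?_ <;>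
    filter_upwards [ae_restrict_mem measurableSet_Ioc] with u hu
  · rw [intervalIntegral.integral_of_le hcd]
    exact setIntegral_nonneg measurableSet_Ioc fun v hv => hf0 u hu v hv
  · exact hinner u hu

lemma rpow_add_rpow_rpow_mul_mul_rpow_le_sub_rpow {H' K u v s : ℝ} (hH' : 1 / 2 ≤ H')
    (hK : K ≤ 2) (hH : H' * K ≤ 1) (hu : 0 ≤ u) (hus : u ≤ s) (hsv : s < v) :
    (u ^ (2 * H') + v ^ (2 * H')) ^ (K - 2) * (u * v) ^ (2 * H' - 1)
      ≤ (v - s) ^ (2 * (H' * K - 1)) := by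
  have hv : 0 < v := by linarith
  calc _ ≤ v ^ (2 * H' * (K - 2) + 2 * (2 * H' - 1)) :=
        rpow_add_rpow_rpow_mul_mul_rpow_le hu (by linarith) hv (by linarith) (by linarith)
    _ = v ^ (2 * (H' * K - 1)) := by ring_nf
    _ ≤ (v - s) ^ (2 * (H' * K - 1)) :=
        rpow_le_rpow_of_nonpos (sub_pos.2 hsv) (by linarith) (by linarith)

theorem stmt18 (θ H' K : ℝ) (hθ : 0 < θ) (hH' : H' ∈ Set.Ioo (1/2 : ℝ) 1)
    (hK : K ∈ Set.Ioo (0 : ℝ) 2) (hH : H' * K ∈ Set.Ioo (1/2 : ℝ) 1) :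
    ∃ C > 0, ∀ s t : ℝ, 0 < s → s ≤ t →
      ∫ u in (0:ℝ)..s, (∫ v in s..t, Real.exp (-θ * (s - u)) * Real.exp (-θ * (t - v)) *
            (u ^ (2 * H') + v ^ (2 * H')) ^ (K - 2) * (u * v) ^ (2 * H' - 1))
        ≤ C * (t - s) ^ (2 * (H' * K - 1)) := by
  set A := 2 * (H' * K - 1)
  have hA : 0 < A + 1 := by linarith [hH.1]
  have hA0 : A ≤ 0 := by linarith [hH.2]
  refine ⟨((A + 1)⁻¹ + 1) / (θ ^ 2 * 2 ^ A), by positivity, fun s t hs hst => ?_⟩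
  have hrpow : IntervalIntegrable (fun v => (v - s) ^ A) volume s t := by
    simpa using (intervalIntegral.intervalIntegrable_rpow' (a := 0) (b := t - s)
      (by linarith : -1 < A)).comp_sub_right s
  have hh : IntervalIntegrable (fun v => exp (-θ * (t - v)) * (v - s) ^ A) volume s t :=
    hrpow.continuousOn_mul (by fun_prop)
  calc _ ≤ (∫ u in (0:ℝ)..s, exp (-θ * (s - u))) *
        ∫ v in s..t, exp (-θ * (t - v)) * (v - s) ^ A := by
        refine integral_integral_le_integral_mul_integral hs.le hst
          (Continuous.intervalIntegrable (by fun_prop) _ _) hh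
          (fun u hu v hv => ?_) (fun u hu v hv => ?_)
        · have := hu.1.le
          have : 0 < v := by linarith [hv.1]
          positivity
        · rw [mul_assoc, mul_assoc]
          gcongr
          exact rpow_add_rpow_rpow_mul_mul_rpow_le_sub_rpow hH'.1.le hK.2.le hH.2.le hu.1.le hu.2
            hv.1
    _ ≤ θ⁻¹ * (((A + 1)⁻¹ + 1) / θ * ((t - s) / 2) ^ A) := by
        gcongr
        · exact intervalIntegral.integral_nonneg hst fun v hv => by
            have := sub_nonneg.2 hv.1; positivity
        · exact integral_exp_neg_mul_sub_le hθ 0 s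
        · exact integral_exp_neg_mul_sub_mul_rpow_sub_le hθ (by linarith) hA0 hst
    _ = _ := by
        rw [div_rpow (sub_nonneg.2 hst) zero_le_two]
        field_simp
end
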